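/- (Generalized Hong–Ou–Mandel suppression) Let F = (1/√2)·[[1,1],[1,−1]] be the 2×2 discrete Fourier (50:50 beam splitter) matrix and let n̄ be a positive integer. Then for every pair (n₁,n₂) of nonnegative integers with n₁ + n₂ = 2n̄ and n₁ odd, the matrix entry [B_{2n̄}(F)]_{(n₁,n₂),(n̄,n̄)} of the 2n̄-boson representation of F is zero. -/

import Mathlib

/-!
Swapping the two columns of `F` multiplies its second row by `-1`. For the input `(n̄, n̄)` this
swap lifts to a permutation of the `2n̄` repeated columns, which leaves the permanent unchanged,
while the row signs multiply it by `(-1)^{n₂}`. Since `n₂` is odd, the permanent equals its own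
negative and hence vanishes.
-/

namespace BSF

variable {α : Type*} [Fintype α] [DecidableEq α]

/-- The canonical list in which each index `i` is repeated `ν i` times. -/
noncomputable def repList (ν : α → ℕ) : List α :=
  Finset.univ.toList.flatMap fun i => List.replicate (ν i) i

set_option linter.unusedSectionVars false in
lemma repList_length (ν : α → ℕ) : (repList ν).length = ∑ i, ν i := by
  simp [repList, List.length_flatMap]

/-- The index set `T(m,n)`: occupation-number tuples with total `n`. -/
def BosonIdx (α : Type*) [Fintype α] (n : ℕ) := {ν : α → ℕ // ∑ i, ν i = n}

instance {n : ℕ} : DecidableEq (BosonIdx α n) :=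
  inferInstanceAs (DecidableEq {ν : α → ℕ // ∑ i, ν i = n})

noncomputable instance {n : ℕ} : Fintype (BosonIdx α n) :=
  Fintype.ofInjective
    (fun ν : BosonIdx α n => fun i : α =>
      (⟨ν.1 i, by
        have h := Finset.single_le_sum (f := ν.1) (fun j _ => Nat.zero_le _) (Finset.mem_univ i)
        rw [ν.2] at h
        omega⟩ : Fin (n + 1)))
    (fun a b hab => Subtype.ext (funext fun i => congrArg Fin.val (congrFun hab i)))

/-- The permanent of a square complex matrix. -/
noncomputable def permanent {n : ℕ} (M : Matrix (Fin n) (Fin n) ℂ) : ℂ :=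
  ∑ σ : Equiv.Perm (Fin n), ∏ i, M (σ i) i

/-- The canonical repetition function associated with an occupation tuple. -/
noncomputable def repFun {n : ℕ} (ν : BosonIdx α n) : Fin n → α :=
  fun k => (repList ν.1).get (Fin.cast ((repList_length ν.1).trans ν.2).symm k)

/-- The `n`-boson representation of a matrix `S`. -/
noncomputable def bosonRep (n : ℕ) (S : Matrix α α ℂ) :
    Matrix (BosonIdx α n) (BosonIdx α n) ℂ :=
  Matrix.of fun ν ν' =>
    permanent (Matrix.of fun k l => S (repFun ν k) (repFun ν' l)) /
      (Real.sqrt ((∏ i, (ν.1 i).factorial * (ν'.1 i).factorial : ℕ) : ℝ) : ℂ)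

/-- Relabeling an occupation tuple by (precomposition with) a permutation of the modes. -/
def permIdx {n : ℕ} (σ : Equiv.Perm α) (ν : BosonIdx α n) : BosonIdx α n :=
  ⟨ν.1 ∘ σ, show ∑ i, ν.1 (σ i) = n from (Equiv.sum_comp σ ν.1).trans ν.2⟩

open Finset Equiv

lemma count_repList (ν : α → ℕ) (i : α) : (repList ν).count i = ν i := by
  simp [repList, List.count_flatMap, List.count_replicate]

lemma card_repFun_fiber {n : ℕ} (ν : BosonIdx α n) (i : α) :
    Fintype.card {k // repFun ν k = i} = ν.1 i := by
  have hofFn : List.ofFn (repFun ν) = repList ν.1 := by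
    apply List.ext_get <;> simp [repFun, repList_length, ν.2]
  rw [Fintype.card_subtype, ← count_repList ν.1, ← hofFn, ← Multiset.coe_count, ← Fin.univ_val_map,
    Multiset.count_map]
  simp only [eq_comm (b := i)]; rfl

lemma exists_perm_comp_eq_of_card_fiber_eq {β γ : Type*} [Fintype β] [DecidableEq γ]
    {f g : β → γ} (h : ∀ c, Fintype.card {b // f b = c} = Fintype.card {b // g b = c}) :
    ∃ e : Perm β, ∀ b, g (e b) = f b :=
  ⟨ofFiberEquiv fun c => Fintype.equivOfCardEq (h c), ofFiberEquiv_map _⟩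

lemma permanent_mul_rows {n : ℕ} (s : Fin n → ℂ) (M : Matrix (Fin n) (Fin n) ℂ) :
    permanent (Matrix.of fun k l => s k * M k l) = (∏ k, s k) * permanent M := by
  simp only [permanent, Matrix.of_apply, prod_mul_distrib, mul_sum, Equiv.prod_comp]

lemma permanent_eq_zero_of_permute_cols_eq_mul_rows {n : ℕ} (M : Matrix (Fin n) (Fin n) ℂ)
    (e : Perm (Fin n)) (s : Fin n → ℂ) (hs : ∏ k, s k = -1)
    (hM : ∀ k l, M k (e l) = s k * M k l) : permanent M = 0 := by
  have hcols : permanent (M.submatrix id e) = permanent M := Matrix.permanent_permute_rows e M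
  have hsign : permanent (M.submatrix id e) = -permanent M := by
    rw [show M.submatrix id e = Matrix.of fun k l => s k * M k l from Matrix.ext hM,
      permanent_mul_rows, hs, neg_one_mul]
  exact CharZero.eq_neg_self_iff.mp (hcols.symm.trans hsign)

theorem bosonRep_eq_zero_of_permute_cols_eq_mul_rows {n : ℕ} (S : Matrix α α ℂ) (τ : Perm α)
    (ε : α → ℂ) (hS : ∀ i j, S i (τ j) = ε i * S i j) (ν ν' : BosonIdx α n)
    (hν' : permIdx τ ν' = ν') (hε : ∏ i, ε i ^ ν.1 i = -1) :
    bosonRep n S ν ν' = 0 := by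
  have hinv : ∀ j, ν'.1 (τ j) = ν'.1 j := fun j => congrFun (congrArg Subtype.val hν') j
  have hfiber : ∀ j, Fintype.card {l // τ (repFun ν' l) = j} =
      Fintype.card {l // repFun ν' l = j} := by
    intro j
    simp only [← eq_symm_apply τ, card_repFun_fiber, ← hinv (τ.symm j), apply_symm_apply]
  obtain ⟨e, he⟩ := exists_perm_comp_eq_of_card_fiber_eq hfiber
  suffices hper : permanent (Matrix.of fun k l => S (repFun ν k) (repFun ν' l)) = 0 by
    rw [bosonRep, Matrix.of_apply, hper, zero_div]
  refine permanent_eq_zero_of_permute_cols_eq_mul_rows _ e (fun k => ε (repFun ν k)) ?_ ?_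
  · rw [← Fintype.prod_fiberwise' (repFun ν) ε]
    simp only [prod_const, card_univ, card_repFun_fiber, hε]
  · intro k l
    simp only [Matrix.of_apply, he, hS]

/-- Generalized Hong–Ou–Mandel suppression. For the 50:50 beam splitter
`F = (1/√2)·[[1,1],[1,−1]]` and input `(n̄, n̄)`, all outputs `(n₁, n₂)` with `n₁` odd are
suppressed: the corresponding entry of the `2n̄`-boson representation of `F` vanishes. -/
theorem hom_suppression (nb : ℕ) (n₁ n₂ : ℕ)
    (h : n₁ + n₂ = 2 * nb) (hodd : Odd n₁) :
    bosonRep (2 * nb)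
      (((Real.sqrt 2 : ℝ) : ℂ)⁻¹ • (!![1, 1; 1, -1] : Matrix (Fin 2) (Fin 2) ℂ))
      ⟨![n₁, n₂], by simpa [Fin.sum_univ_two] using h⟩
      ⟨![nb, nb], by simp [Fin.sum_univ_two]; omega⟩ = 0 := by
  have hodd₂ : Odd n₂ := by
    obtain ⟨t, rfl⟩ := hodd
    exact ⟨nb - t - 1, by omega⟩
  refine bosonRep_eq_zero_of_permute_cols_eq_mul_rows _ (swap 0 1) ![1, -1] ?_ _ _ ?_ ?_
  · intro i j
    fin_cases i <;> fin_cases j <;> simp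
  · refine Subtype.ext (funext fun j => ?_)
    fin_cases j <;> rfl
  · simp [Fin.prod_univ_two, hodd₂.neg_one_pow]

end BSF
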